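/- arXiv:2507.07852 — 2 statements merged into one kernel-verified Lean document; each statement's English description precedes it below -/
import Mathlib

section
/- Let e*, e : X → [ε₀, 1] be measurable with ε₀ > 0 and let h : X → [−2, 2] be measurable. Then E[(e*(x)/e(x))·h(x)²] ≥ (1/2)·E[h(x)²] − (8/ε₀²)·E[(e(x) − e*(x))²]. -/
open MeasureTheory

/-- If `e*, e : X → [ε₀, 1]` are measurable with `ε₀ > 0` and
`h : X → [−2, 2]` is measurable, then
`E[(e*(x)/e(x))·h(x)²] ≥ (1/2)·E[h(x)²] − (8/ε₀²)·E[(e(x) − e*(x))²]`. -/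
theorem stmt12 {X : Type*} [MeasurableSpace X] (μ : Measure X) [IsProbabilityMeasure μ]
    (eps0 : ℝ) (heps0 : 0 < eps0)
    (estar e : X → ℝ) (hestarMeas : Measurable estar) (heMeas : Measurable e)
    (hestarRange : ∀ x, estar x ∈ Set.Icc eps0 1) (heRange : ∀ x, e x ∈ Set.Icc eps0 1)
    (h : X → ℝ) (hhMeas : Measurable h) (hhRange : ∀ x, h x ∈ Set.Icc (-2 : ℝ) 2) :
    (1 / 2) * ∫ x, (h x) ^ 2 ∂μ - (8 / eps0 ^ 2) * ∫ x, (e x - estar x) ^ 2 ∂μ ≤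
      ∫ x, (estar x / e x) * (h x) ^ 2 ∂μ := by
  have hint1 : Integrable (fun x => (h x) ^ 2) μ := by
    refine (integrable_const (4 : ℝ)).mono' ((hhMeas.pow_const 2).aestronglyMeasurable)
      (Filter.Eventually.of_forall fun x => ?_)
    have := hhRange x
    rw [Real.norm_eq_abs, abs_of_nonneg (sq_nonneg _)]
    nlinarith [this.1, this.2]
  have hint2 : Integrable (fun x => (e x - estar x) ^ 2) μ := by
    refine (integrable_const (1 : ℝ)).mono' (((heMeas.sub hestarMeas).pow_const 2).aestronglyMeasurable)
      (Filter.Eventually.of_forall fun x => ?_)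
    have h1 := heRange x; have h2 := hestarRange x
    rw [Real.norm_eq_abs, abs_of_nonneg (sq_nonneg _)]
    nlinarith [h1.1, h1.2, h2.1, h2.2, heps0]
  have hint3 : Integrable (fun x => (estar x / e x) * (h x) ^ 2) μ := by
    refine (integrable_const (4 / eps0 : ℝ)).mono'
      (((hestarMeas.div heMeas).mul (hhMeas.pow_const 2)).aestronglyMeasurable)
      (Filter.Eventually.of_forall fun x => ?_)
    have h1 := heRange x; have h2 := hestarRange x; have h3 := hhRange x
    have hbpos : 0 < e x := lt_of_lt_of_le heps0 h1.1
    have hr0 : 0 ≤ estar x / e x := div_nonneg (le_trans heps0.le h2.1) hbpos.le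
    have hr : estar x / e x ≤ 1 / eps0 := by
      rw [div_le_div_iff₀ hbpos heps0]
      nlinarith [h1.1, h2.2]
    rw [Real.norm_eq_abs, abs_of_nonneg (mul_nonneg hr0 (sq_nonneg _))]
    have hh4 : (h x) ^ 2 ≤ 4 := by nlinarith [h3.1, h3.2]
    calc estar x / e x * h x ^ 2 ≤ (1 / eps0) * 4 :=
          mul_le_mul hr hh4 (sq_nonneg _) (by positivity)
      _ = 4 / eps0 := by ring
  have key : ∀ x, (1 / 2) * (h x) ^ 2 - (8 / eps0 ^ 2) * (e x - estar x) ^ 2 ≤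
      (estar x / e x) * (h x) ^ 2 := by
    intro x
    have h1 := heRange x; have h2 := hestarRange x; have h3 := hhRange x
    have hbpos : 0 < e x := lt_of_lt_of_le heps0 h1.1
    have hh4 : (h x) ^ 2 ≤ 4 := by nlinarith [h3.1, h3.2]
    by_cases hc : (1 : ℝ) / 2 ≤ estar x / e x
    · have : (1 / 2) * (h x) ^ 2 ≤ (estar x / e x) * (h x) ^ 2 :=
        mul_le_mul_of_nonneg_right hc (sq_nonneg _)
      have hpos : 0 ≤ (8 / eps0 ^ 2) * (e x - estar x) ^ 2 := by positivity
      linarith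
    · push_neg at hc
      have h2a : 2 * estar x < e x := by
        rw [div_lt_div_iff₀ hbpos (by norm_num : (0:ℝ) < 2)] at hc
        linarith
      have hgap : eps0 / 2 ≤ e x - estar x := by
        nlinarith [h2.1]
      have hgap2 : eps0 ^ 2 / 4 ≤ (e x - estar x) ^ 2 := by nlinarith [heps0]
      have hRHS : (2 : ℝ) ≤ (8 / eps0 ^ 2) * (e x - estar x) ^ 2 := by
        rw [div_mul_eq_mul_div, le_div_iff₀ (by positivity)]
        nlinarith
      have hr0 : 0 ≤ (estar x / e x) * (h x) ^ 2 := by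
        have : 0 ≤ estar x / e x := div_nonneg (le_trans heps0.le h2.1) hbpos.le
        positivity
      nlinarith
  calc (1 / 2) * ∫ x, (h x) ^ 2 ∂μ - (8 / eps0 ^ 2) * ∫ x, (e x - estar x) ^ 2 ∂μ
      = ∫ x, ((1 / 2) * (h x) ^ 2 - (8 / eps0 ^ 2) * (e x - estar x) ^ 2) ∂μ := by
        rw [integral_sub (hint1.const_mul _) (hint2.const_mul _), integral_const_mul,
          integral_const_mul]
    _ ≤ ∫ x, (estar x / e x) * (h x) ^ 2 ∂μ :=
        integral_mono ((hint1.const_mul _).sub (hint2.const_mul _)) hint3 key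
end

section
/- Under the MAR setup, let L(g, e) := E[b·(b z* − g(x))²/e(x)]. Then for every g ∈ G and every measurable e : X → [ε₀, 1], the deterministic error decomposition (1/2)·‖g − g*‖₂² ≤ (8/ε₀²)·‖e − e*‖₂² + L(g, e) − L(g*, e) holds. -/
open MeasureTheory

noncomputable section

/-- A sample in the Missing At Random setting: context `x`, true covariate `z*`,
and missingness indicator `b`. -/
abbrev MSamp (X : Type*) : Type _ := X × ℝ × Bool

namespace MSamp

variable {X : Type*}

/-- the context -/
def x (s : MSamp X) : X := s.1

/-- the true covariate `z*` -/
def z (s : MSamp X) : ℝ := s.2.1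

/-- the missingness indicator -/
def b (s : MSamp X) : Bool := s.2.2

/-- the missingness indicator, as a real number in `{0, 1}` -/
def bR (s : MSamp X) : ℝ := if s.2.2 then 1 else 0

end MSamp

/-- The Missing At Random (MAR) data-generating setup: `(x, z*, b) ~ P`,
`P(b = 1 ∣ x, z*) = e*(x)` (so `b ⟂ z*` given `x`), and `z* = g*(x) + η` with
`E[η ∣ x] = 0` and `|η| ≤ τ` a.s. -/
structure MARSetup (X : Type*) [MeasurableSpace X] where
  /-- the law of one sample `(x, z*, b)` -/
  P : Measure (MSamp X)
  probP : IsProbabilityMeasure P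
  /-- the missingness mechanism `e*(x) = P(b = 1 ∣ x)` -/
  estar : X → ℝ
  estarMeas : Measurable estar
  estarRange : ∀ x, estar x ∈ Set.Icc (0 : ℝ) 1
  /-- Missing At Random: `P(b = 1 ∣ x, z*) = e*(x)` -/
  mar : P[fun s : MSamp X => MSamp.bR s |
      MeasurableSpace.comap (fun s : MSamp X => (MSamp.x s, MSamp.z s)) inferInstance]
        =ᵐ[P] fun s => estar (MSamp.x s)
  /-- the true covariate regression function -/
  gstar : X → ℝ
  gstarMeas : Measurable gstar
  gstarRange : ∀ x, gstar x ∈ Set.Icc (-1 : ℝ) 1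
  /-- the noise bound -/
  tau : ℝ
  /-- the covariate noise `η = z* − g*(x)` is bounded by `τ` -/
  eta_bdd : ∀ᵐ s ∂P, |MSamp.z s - gstar (MSamp.x s)| ≤ tau
  /-- `E[η ∣ x] = 0` -/
  eta_mean : P[fun s : MSamp X => MSamp.z s - gstar (MSamp.x s) |
      MeasurableSpace.comap (MSamp.x (X := X)) inferInstance] =ᵐ[P] 0

namespace MARSetup

variable {X : Type*} [MeasurableSpace X]

/-- the `L₂(P)` distance between two functions of the context -/
def L2x (S : MARSetup X) (g h : X → ℝ) : ℝ :=
  Real.sqrt (∫ s, (g (MSamp.x s) - h (MSamp.x s)) ^ 2 ∂S.P)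

/-- the inverse-propensity weighted squared loss `L(g, e) = E[b (b z* − g(x))² / e(x)]` -/
def wloss (S : MARSetup X) (g e : X → ℝ) : ℝ :=
  ∫ s, MSamp.bR s * (MSamp.bR s * MSamp.z s - g (MSamp.x s)) ^ 2 / e (MSamp.x s) ∂S.P

end MARSetup

/-!
Since `b ∈ {0,1}`, the difference of the two losses is `b (d² − 2 η d) / e` with `d = g − g*` and
`η = z* − g*(x)`. Conditioning on `(x, z*)` replaces `b` by `e*(x)` (Missing At Random), and
conditioning on `x` kills the cross term `E[η ∣ x] = 0`, so
`L(g, e) − L(g*, e) = E[d² e* / e]`. Pointwise,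
`d² e*/e = d² − d² (e − e*)/e ≥ d² − 2|d||e − e*|/ε₀ ≥ d²/2 − 2 (e − e*)²/ε₀²` because `|d| ≤ 2`.
-/

theorem integral_mul_eq_of_condExp_ae_eq {Ω : Type*} {m m₀ : MeasurableSpace Ω} {μ : Measure Ω}
    (hm : m ≤ m₀) [SigmaFinite (μ.trim hm)] {φ f h : Ω → ℝ} (hφ : StronglyMeasurable[m] φ)
    (hf : Integrable f μ) (hφf : Integrable (φ * f) μ) (hfh : μ[f|m] =ᵐ[μ] h) :
    ∫ ω, φ ω * f ω ∂μ = ∫ ω, φ ω * h ω ∂μ :=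
  calc ∫ ω, φ ω * f ω ∂μ = ∫ ω, (μ[φ * f|m]) ω ∂μ := (integral_condExp hm).symm
    _ = ∫ ω, φ ω * h ω ∂μ := integral_congr_ae <|
      (condExp_mul_of_stronglyMeasurable_left hφ hφf hf).trans <| hfh.mono fun ω hω => by
        simp [hω]

theorem half_mul_sq_le_div_sq_mul_sq_sub_add {ε d e e' : ℝ} (hε : 0 < ε) (he : ε ≤ e)
    (hd : |d| ≤ 2) : 1 / 2 * d ^ 2 ≤ 8 / ε ^ 2 * (e - e') ^ 2 + d ^ 2 / e * e' := by
  have he₀ : 0 < e := hε.trans_le he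
  have hsplit : d ^ 2 / e * e' = d ^ 2 - d ^ 2 * (e - e') / e := by field_simp; ring
  have hcross : d ^ 2 * (e - e') / e ≤ 2 * |d| * (|e - e'| / ε) :=
    calc d ^ 2 * (e - e') / e ≤ |d ^ 2 * (e - e') / e| := le_abs_self _
      _ = |d| ^ 2 * |e - e'| / e := by rw [abs_div, abs_mul, abs_pow, abs_of_pos he₀]
      _ ≤ 2 * |d| * |e - e'| / ε := by
          gcongr
          nlinarith [abs_nonneg d]
      _ = 2 * |d| * (|e - e'| / ε) := by ring
  have hamgm : 2 * |d| * (|e - e'| / ε) ≤ d ^ 2 / 2 + 2 * ((e - e') / ε) ^ 2 := by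
    rw [show |e - e'| / ε = |(e - e') / ε| by rw [abs_div, abs_of_pos hε]]
    nlinarith [sq_nonneg (|d| - 2 * |(e - e') / ε|), sq_abs d, sq_abs ((e - e') / ε)]
  have hconst : 2 * ((e - e') / ε) ^ 2 ≤ 8 / ε ^ 2 * (e - e') ^ 2 := by
    rw [div_pow, mul_div_assoc', div_mul_eq_mul_div]
    gcongr
    norm_num
  linarith

theorem abs_div_mul_le_div {ε a A e e' : ℝ} (hε : 0 < ε) (he : ε ≤ e) (ha : |a| ≤ A)
    (he' : e' ∈ Set.Icc (0 : ℝ) 1) : |a / e * e'| ≤ A / ε := by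
  have he₀ : 0 < e := hε.trans_le he
  rw [abs_mul, abs_div, abs_of_pos he₀, abs_of_nonneg he'.1]
  calc |a| / e * e' ≤ |a| / e * 1 := by gcongr; exact he'.2
    _ ≤ A / ε := by
      rw [mul_one]
      exact div_le_div₀ ((abs_nonneg a).trans ha) ha hε he

namespace MSamp

variable {X : Type*}

theorem bR_eq_zero_or_one (s : MSamp X) : bR s = 0 ∨ bR s = 1 := by
  unfold bR; split <;> simp

theorem abs_bR_le_one (s : MSamp X) : |bR s| ≤ 1 := by
  rcases bR_eq_zero_or_one s with h | h <;> simp [h]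

variable [MeasurableSpace X]

@[fun_prop]
theorem measurable_x : Measurable (x : MSamp X → X) := measurable_fst

@[fun_prop]
theorem measurable_z : Measurable (z : MSamp X → ℝ) := measurable_fst.comp measurable_snd

@[fun_prop]
theorem measurable_bR : Measurable (bR : MSamp X → ℝ) :=
  (measurable_of_countable fun b : Bool => if b then (1 : ℝ) else 0).comp
    (measurable_snd.comp measurable_snd)

end MSamp

open MSamp

namespace MARSetup

variable {X : Type*} [MeasurableSpace X] (S : MARSetup X)

instance : IsProbabilityMeasure S.P := S.probP

theorem abs_sub_gstar_le_two {g : X → ℝ} (hg : ∀ y, g y ∈ Set.Icc (-1 : ℝ) 1) (y : X) :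
    |g y - S.gstar y| ≤ 2 := by
  obtain ⟨hg₁, hg₂⟩ := hg y
  obtain ⟨hs₁, hs₂⟩ := S.gstarRange y
  rw [abs_le]; constructor <;> linarith

theorem integrable_noise : Integrable (fun s => z s - S.gstar (x s)) S.P :=
  .of_bound (by have := S.gstarMeas; fun_prop) S.tau S.eta_bdd

theorem integrable_comp_x_mul_noise {χ : X → ℝ} (hχ : Measurable χ) {C : ℝ}
    (hC : ∀ y, |χ y| ≤ C) : Integrable (fun s => χ (x s) * (z s - S.gstar (x s))) S.P :=
  S.integrable_noise.bdd_mul (hχ.comp measurable_x).aestronglyMeasurable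
    (ae_of_all _ fun s => hC (x s))

theorem integral_comp_x_mul_noise {χ : X → ℝ} (hχ : Measurable χ) {C : ℝ}
    (hC : ∀ y, |χ y| ≤ C) : ∫ s, χ (x s) * (z s - S.gstar (x s)) ∂S.P = 0 := by
  rw [integral_mul_eq_of_condExp_ae_eq (φ := fun s => χ (x s)) measurable_x.comap_le
    (hχ.comp (comap_measurable x)).stronglyMeasurable S.integrable_noise
    (S.integrable_comp_x_mul_noise hχ hC) S.eta_mean]
  simp

theorem integral_mul_bR {ψ : X × ℝ → ℝ} (hψ : Measurable ψ)
    (hint : Integrable (fun s => ψ (x s, z s) * bR s) S.P) :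
    ∫ s, ψ (x s, z s) * bR s ∂S.P = ∫ s, ψ (x s, z s) * S.estar (x s) ∂S.P :=
  integral_mul_eq_of_condExp_ae_eq (φ := fun s => ψ (x s, z s))
    (measurable_x.prodMk measurable_z).comap_le
    (hψ.comp (comap_measurable _)).stronglyMeasurable
    (.of_bound (by fun_prop) 1 (ae_of_all _ abs_bR_le_one)) hint S.mar

theorem sq_L2x (g h : X → ℝ) : S.L2x g h ^ 2 = ∫ s, (g (x s) - h (x s)) ^ 2 ∂S.P :=
  Real.sq_sqrt (integral_nonneg fun _ => sq_nonneg _)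

theorem integrable_sq_sub_estar {e : X → ℝ} (he : Measurable e)
    (he₁ : ∀ y, e y ∈ Set.Icc (0 : ℝ) 1) :
    Integrable (fun s => (e (x s) - S.estar (x s)) ^ 2) S.P := by
  have := S.estarMeas
  refine .of_bound (by fun_prop : Measurable _).aestronglyMeasurable 1 (ae_of_all _ fun s => ?_)
  obtain ⟨he₀, he₁⟩ := he₁ (x s)
  obtain ⟨hs₀, hs₁⟩ := S.estarRange (x s)
  rw [Real.norm_eq_abs, abs_pow, sq_le_one_iff₀ (abs_nonneg _)]
  exact abs_sub_le_of_nonneg_of_le he₀ he₁ hs₀ hs₁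

section loss

variable {g e : X → ℝ} {ε : ℝ} (hg : Measurable g) (hg₁ : ∀ y, g y ∈ Set.Icc (-1 : ℝ) 1)
  (he : Measurable e) (hε : 0 < ε) (heε : ∀ y, ε ≤ e y)
include hg hg₁ he hε heε

theorem integrable_wloss_integrand :
    Integrable (fun s => bR s * (bR s * z s - g (x s)) ^ 2 / e (x s)) S.P := by
  refine .of_bound (by fun_prop : Measurable _).aestronglyMeasurable ((|S.tau| + 2) ^ 2 / ε) ?_
  filter_upwards [S.eta_bdd] with s hη
  have hzg : |z s - g (x s)| ≤ |S.tau| + 2 :=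
    calc |z s - g (x s)| = |(z s - S.gstar (x s)) - (g (x s) - S.gstar (x s))| := by ring_nf
      _ ≤ |z s - S.gstar (x s)| + |g (x s) - S.gstar (x s)| := abs_sub _ _
      _ ≤ |S.tau| + 2 := add_le_add (hη.trans (le_abs_self _)) (S.abs_sub_gstar_le_two hg₁ _)
  rw [Real.norm_eq_abs]
  rcases bR_eq_zero_or_one s with h | h
  · simp only [h, zero_mul, zero_div, abs_zero]
    positivity
  · rw [h, one_mul, one_mul, abs_div, abs_of_pos (hε.trans_le (heε _)), abs_pow]
    exact div_le_div₀ (by positivity) (pow_le_pow_left₀ (abs_nonneg _) hzg 2) hε (heε _)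

theorem integrable_sq_sub_gstar_div_mul_estar :
    Integrable (fun s => (g (x s) - S.gstar (x s)) ^ 2 / e (x s) * S.estar (x s)) S.P := by
  have := S.gstarMeas
  have := S.estarMeas
  refine .of_bound (by fun_prop : Measurable _).aestronglyMeasurable (4 / ε)
    (ae_of_all _ fun s => ?_)
  refine abs_div_mul_le_div hε (heε _) ?_ (S.estarRange _)
  rw [abs_pow, show (4 : ℝ) = 2 ^ 2 by norm_num]
  exact pow_le_pow_left₀ (abs_nonneg _) (S.abs_sub_gstar_le_two hg₁ _) 2

theorem wloss_sub_wloss_gstar :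
    S.wloss g e - S.wloss S.gstar e =
      ∫ s, (g (x s) - S.gstar (x s)) ^ 2 / e (x s) * S.estar (x s) ∂S.P := by
  have hgs := S.gstarMeas
  have hes := S.estarMeas
  set χ : X → ℝ := fun y => (g y - S.gstar y) / e y * S.estar y
  have hχ : ∀ y, |χ y| ≤ 2 / ε := fun y =>
    abs_div_mul_le_div hε (heε y) (S.abs_sub_gstar_le_two hg₁ y) (S.estarRange y)
  set ψ : X × ℝ → ℝ := fun p =>
    ((g p.1 - S.gstar p.1) ^ 2 - 2 * (p.2 - S.gstar p.1) * (g p.1 - S.gstar p.1)) / e p.1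
  have hdiff : ∀ s, bR s * (bR s * z s - g (x s)) ^ 2 / e (x s) -
      bR s * (bR s * z s - S.gstar (x s)) ^ 2 / e (x s) = ψ (x s, z s) * bR s := by
    intro s
    rcases bR_eq_zero_or_one s with h | h <;> simp only [ψ, h] <;> ring
  have hFg := S.integrable_wloss_integrand hg hg₁ he hε heε
  have hFgs := S.integrable_wloss_integrand hgs S.gstarRange he hε heε
  calc S.wloss g e - S.wloss S.gstar e = ∫ s, ψ (x s, z s) * bR s ∂S.P := by
        rw [wloss, wloss, ← integral_sub hFg hFgs]
        exact integral_congr_ae (ae_of_all _ hdiff)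
    _ = ∫ s, ψ (x s, z s) * S.estar (x s) ∂S.P :=
        S.integral_mul_bR (by fun_prop) ((hFg.sub hFgs).congr (ae_of_all _ hdiff))
    _ = ∫ s, (g (x s) - S.gstar (x s)) ^ 2 / e (x s) * S.estar (x s) ∂S.P -
          2 * ∫ s, χ (x s) * (z s - S.gstar (x s)) ∂S.P := by
        rw [← integral_const_mul,
          ← integral_sub (S.integrable_sq_sub_gstar_div_mul_estar hg hg₁ he hε heε)
            ((S.integrable_comp_x_mul_noise (by fun_prop) hχ).const_mul 2)]
        exact integral_congr_ae (ae_of_all _ fun s => by simp only [ψ, χ]; ring)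
    _ = _ := by rw [S.integral_comp_x_mul_noise (by fun_prop) hχ]; ring

end loss

end MARSetup

theorem stmt13_general {X : Type*} [MeasurableSpace X] (S : MARSetup X)
    (eps0 : ℝ) (heps0 : 0 < eps0)
    (G : Set (X → ℝ)) (hGmeas : ∀ g ∈ G, Measurable g)
    (hGrange : ∀ g ∈ G, ∀ x, g x ∈ Set.Icc (-1 : ℝ) 1)
    (g : X → ℝ) (hg : g ∈ G)
    (e : X → ℝ) (heMeas : Measurable e) (heRange : ∀ x, e x ∈ Set.Icc eps0 1) :
    (1 / 2) * (S.L2x g S.gstar) ^ 2 ≤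
      (8 / eps0 ^ 2) * (S.L2x e S.estar) ^ 2 + (S.wloss g e - S.wloss S.gstar e) := by
  have hgm := hGmeas g hg
  have hgr := hGrange g hg
  have heε : ∀ y, eps0 ≤ e y := fun y => (heRange y).1
  have hsq := S.integrable_sq_sub_estar heMeas fun y => ⟨heps0.le.trans (heε y), (heRange y).2⟩
  have hcross := S.integrable_sq_sub_gstar_div_mul_estar hgm hgr heMeas heps0 heε
  rw [S.wloss_sub_wloss_gstar hgm hgr heMeas heps0 heε, S.sq_L2x, S.sq_L2x,
    ← integral_const_mul, ← integral_const_mul,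
    ← integral_add (hsq.const_mul _) hcross]
  exact integral_mono_of_nonneg (ae_of_all _ fun _ => by positivity)
    ((hsq.const_mul _).add hcross)
    (ae_of_all _ fun s => half_mul_sq_le_div_sq_mul_sq_sub_add heps0 (heε _)
      (S.abs_sub_gstar_le_two hgr _))

/-- Deterministic error decomposition: in the MAR setup with
`e*(x) ≥ ε₀ > 0`, for every `g` in a class `G` of measurable `[−1,1]`-valued functions
containing `g*`, and every measurable `e : X → [ε₀, 1]`,
`(1/2)·‖g − g*‖₂² ≤ (8/ε₀²)·‖e − e*‖₂² + L(g, e) − L(g*, e)`. -/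
theorem stmt13 {X : Type*} [MeasurableSpace X] (S : MARSetup X)
    (eps0 : ℝ) (heps0 : 0 < eps0) (hestarLB : ∀ x, eps0 ≤ S.estar x)
    (G : Set (X → ℝ)) (hGmeas : ∀ g ∈ G, Measurable g)
    (hGrange : ∀ g ∈ G, ∀ x, g x ∈ Set.Icc (-1 : ℝ) 1) (hgstarG : S.gstar ∈ G)
    (g : X → ℝ) (hg : g ∈ G)
    (e : X → ℝ) (heMeas : Measurable e) (heRange : ∀ x, e x ∈ Set.Icc eps0 1) :
    (1 / 2) * (S.L2x g S.gstar) ^ 2 ≤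
      (8 / eps0 ^ 2) * (S.L2x e S.estar) ^ 2 + (S.wloss g e - S.wloss S.gstar e) :=
  stmt13_general S eps0 heps0 G hGmeas hGrange g hg e heMeas heRange
end
end
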